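/- arXiv:2503.13114 — 3 statements merged into one kernel-verified Lean document; each statement's English description precedes it below -/
import Mathlib

section
/- If a noise channel N(ρ) = Σ_j N_j ρ N_j† has Kraus operators satisfying Σ_i Π_i N_j Π_i ∝ I for every j, where {Π_i} is a complete family of orthogonal projectors (Σ_i Π_i = I, Π_i Π_j = δ_ij Π_i), and U is a unitary commuting with every Π_i, then the map ρ ↦ Σ_{i,j} Π_i (N∘U)(Π_i ρ Π_j) Π_j is proportional to the unitary channel ρ ↦ U ρ U†. -/
/-!
Write `pinching P X = ∑ i, Π i X Π i`. Since `U` and `U†` commute with every `Π i`, each Kraus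
term of the `(i, j)` block is `(Π i N Π i) (U ρ U†) (Π j N† Π j)`, so summing over `i` and `j`
factors it as `pinching N · U ρ U† · pinching N†`. Both pinchings are scalars by hypothesis
(the second being the adjoint of the first), so every Kraus operator contributes `|c|² U ρ U†`.
-/

open Finset Matrix

section Pinching

variable {ι A : Type*} [Fintype ι]

def pinching [Semiring A] (P : ι → A) (X : A) : A :=
  ∑ i, P i * X * P i

theorem sum_sum_sandwich_eq_pinching_mul_pinching [Semiring A] {P : ι → A} {U V : A}
    (hU : ∀ i, Commute U (P i)) (hV : ∀ i, Commute V (P i)) (K L ρ : A) :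
    ∑ i, ∑ j, P i * (K * (U * (P i * ρ * P j) * V) * L) * P j
      = pinching P K * (U * ρ * V) * pinching P L := by
  have hterm : ∀ i j, P i * (K * (U * (P i * ρ * P j) * V) * L) * P j
      = P i * K * P i * (U * ρ * V) * (P j * L * P j) := by
    intro i j
    simp only [mul_assoc]
    rw [← mul_assoc U (P i), hU i, ← mul_assoc (P j) V, ← (hV j).eq]
    simp only [mul_assoc]
  simp only [hterm, pinching, sum_mul, mul_sum]
  exact sum_comm

theorem star_pinching [Semiring A] [StarRing A] {P : ι → A} (hP : ∀ i, IsSelfAdjoint (P i))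
    (X : A) : star (pinching P X) = pinching P (star X) := by
  simp only [pinching, star_sum, star_mul, (hP _).star_eq, mul_assoc]

variable {R : Type*} [CommSemiring R] [StarRing R] [Semiring A] [StarRing A] [Algebra R A]
  [StarModule R A]

theorem sum_sum_sandwich_eq_smul_of_pinching_eq_smul_one {P : ι → A}
    (hP : ∀ i, IsSelfAdjoint (P i)) {U : A} (hU : ∀ i, Commute U (P i)) {K : A} {c : R}
    (hK : pinching P K = c • 1) (ρ : A) :
    ∑ i, ∑ j, P i * (K * (U * (P i * ρ * P j) * star U) * star K) * P j
      = (c * star c) • (U * ρ * star U) := by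
  have hUstar : ∀ i, Commute (star U) (P i) := fun i => (hP i).star_eq ▸ (hU i).star_star
  rw [sum_sum_sandwich_eq_pinching_mul_pinching hU hUstar, ← star_pinching hP, hK, star_smul,
    star_one, smul_mul_assoc, one_mul, mul_smul_one, smul_smul, mul_comm]

theorem exists_pinched_kraus_sandwich_eq_smul {κ : Type*} [Fintype κ] {P : ι → A}
    (hP : ∀ i, IsSelfAdjoint (P i)) (K : κ → A) {U : A} (hU : ∀ i, Commute U (P i))
    (hK : ∀ k, ∃ c : R, pinching P (K k) = c • 1) :
    ∃ c : R, ∀ ρ : A,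
      ∑ i, ∑ j, P i * (∑ k, K k * (U * (P i * ρ * P j) * star U) * star (K k)) * P j
        = c • (U * ρ * star U) := by
  choose c hc using hK
  refine ⟨∑ k, c k * star (c k), fun ρ => ?_⟩
  rw [sum_smul, ← sum_congr rfl fun k _ =>
    sum_sum_sandwich_eq_smul_of_pinching_eq_smul_one hP hU (hc k) ρ]
  simp only [mul_sum, sum_mul]
  exact (sum_congr rfl fun _ _ => sum_comm).trans sum_comm

end Pinching

theorem scv_detection_general {d M J : ℕ}
    (P : Fin M → Matrix (Fin d) (Fin d) ℂ)
    (hherm : ∀ i, (P i)ᴴ = P i)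
    (K : Fin J → Matrix (Fin d) (Fin d) ℂ)
    (U : Matrix (Fin d) (Fin d) ℂ)
    (hUcomm : ∀ i, U * P i = P i * U)
    (hsym : ∀ j, ∃ c : ℂ, ∑ i, P i * K j * P i = c • (1 : Matrix (Fin d) (Fin d) ℂ)) :
    ∃ c : ℂ, ∀ ρ : Matrix (Fin d) (Fin d) ℂ,
      ∑ i, ∑ j, P i * (∑ k, K k * (U * (P i * ρ * P j) * Uᴴ) * (K k)ᴴ) * P j
        = c • (U * ρ * Uᴴ) :=
  exists_pinched_kraus_sandwich_eq_smul hherm K hUcomm hsym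

/-- If the Kraus operators of a noise channel satisfy
`∑ i, Π i * N j * Π i ∝ 1` for every `j`, and `U` is a unitary commuting with each
projector of a complete orthogonal family, then
`ρ ↦ ∑ i j, Π i * (N ∘ U)(Π i ρ Π j) * Π j` is proportional to `ρ ↦ U ρ U†`. -/
theorem scv_detection {d M J : ℕ}
    (P : Fin M → Matrix (Fin d) (Fin d) ℂ)
    (hherm : ∀ i, (P i)ᴴ = P i)
    (hproj : ∀ i, P i * P i = P i)
    (horth : ∀ i j, i ≠ j → P i * P j = 0)
    (hcomplete : ∑ i, P i = 1)
    (K : Fin J → Matrix (Fin d) (Fin d) ℂ)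
    (hKraus : ∑ j, (K j)ᴴ * K j = 1)
    (U : Matrix (Fin d) (Fin d) ℂ)
    (hU : Uᴴ * U = 1) (hU' : U * Uᴴ = 1)
    (hUcomm : ∀ i, U * P i = P i * U)
    (hsym : ∀ j, ∃ c : ℂ, ∑ i, P i * K j * P i = c • (1 : Matrix (Fin d) (Fin d) ℂ)) :
    ∃ c : ℂ, ∀ ρ : Matrix (Fin d) (Fin d) ℂ,
      ∑ i, ∑ j, P i * (∑ k, K k * (U * (P i * ρ * P j) * Uᴴ) * (K k)ᴴ) * P j
        = c • (U * ρ * Uᴴ) :=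
  scv_detection_general P hherm K U hUcomm hsym
end

section
/- Let U be an n-qubit unitary, Q_U the group generated (up to phase) by the Pauli operators appearing with nonzero coefficient in the Pauli expansion of U, and Q_U^com the set of Pauli operators commuting with U. Then a Pauli operator P satisfies P ∉ Q_U if and only if there exists Q ∈ Q_U^com with PQ ≠ QP. -/
/-!
Encode a Pauli operator by its binary symplectic vector `(x, z) ∈ (𝔽₂²)ⁿ`. Products of Pauli
operators are, up to a nonzero phase, the Pauli operators of the sums of their vectors, so
`P ∈ Q_U` says exactly that the vector of `P` lies in the `𝔽₂`-span `W` of the vectors of `Q_U'`.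
Two Pauli operators commute iff the symplectic form vanishes on their vectors, and, by the Pauli
expansion of `U`, `U` commutes with `Q` iff `Q` commutes with every element of `Q_U'`; so the
vectors of `Q_U^com` form the symplectic complement `W^⊥`. Since the symplectic form is
nondegenerate, `W^⊥⊥ = W`, i.e. `P ∉ Q_U` iff some element of `W^⊥` pairs nontrivially with `P`.
-/

open Matrix BigOperators

noncomputable section

/-- The four single-qubit Pauli matrices `I, X, Y, Z`. -/
def pauliMat : Fin 4 → Matrix (Fin 2) (Fin 2) ℂ :=
  ![1, !![0, 1; 1, 0], !![0, -Complex.I; Complex.I, 0], !![1, 0; 0, -1]]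

/-- The `n`-qubit Pauli operator given by a choice of single-qubit Pauli on each
tensor factor (entrywise Kronecker product). -/
def PauliOp (n : ℕ) (f : Fin n → Fin 4) :
    Matrix (Fin n → Fin 2) (Fin n → Fin 2) ℂ :=
  fun v w => ∏ i, pauliMat (f i) (v i) (w i)

lemma AddChar.map_sum_eq_prod {ι A M : Type*} [AddCommMonoid A] [CommMonoid M]
    (ψ : AddChar A M) (s : Finset ι) (f : ι → A) : ψ (∑ i ∈ s, f i) = ∏ i ∈ s, ψ (f i) := by
  classical
  induction s using Finset.induction_on with
  | empty => simp
  | insert a s ha ih => rw [Finset.sum_insert ha, Finset.prod_insert ha, map_add_eq_mul, ih]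

def signChar : AddChar (ZMod 2) ℂ where
  toFun t := (-1) ^ t.val
  map_zero_eq_one' := by simp
  map_add_eq_mul' a b := by rw [ZMod.val_add, ← neg_one_pow_eq_pow_mod_two, pow_add]

lemma signChar_apply_of_ne_zero {t : ZMod 2} (ht : t ≠ 0) : signChar t = -1 := by
  obtain rfl : t = 1 := by revert t; decide
  simp [signChar, ZMod.val_one]

theorem Submodule.mem_span_zmod_iff_exists_list {k : ℕ} [NeZero k] {M : Type*} [AddCommGroup M]
    [Module (ZMod k) M] {s : Set M} {x : M} :
    x ∈ span (ZMod k) s ↔ ∃ l : List M, (∀ y ∈ l, y ∈ s) ∧ l.sum = x := by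
  refine ⟨fun hx => AddSubmonoid.exists_list_of_mem_closure ?_, fun ⟨l, hl, hsum⟩ =>
    hsum ▸ list_sum_mem fun y hy => subset_span (hl y hy)⟩
  induction hx using span_induction with
  | mem y hy => exact AddSubmonoid.subset_closure hy
  | zero => exact zero_mem _
  | add _ _ _ _ h₁ h₂ => exact add_mem h₁ h₂
  | smul c y _ h =>
    rw [← ZMod.natCast_zmod_val c, Nat.cast_smul_eq_nsmul]
    exact nsmul_mem h _

theorem LinearMap.BilinForm.notMem_span_iff_exists_orthogonal {K V : Type*} [Field K]
    [AddCommGroup V] [Module K V] [FiniteDimensional K V] {B : LinearMap.BilinForm K V}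
    (hB : B.Nondegenerate) (hB₀ : B.IsRefl) {s : Set V} {x : V} :
    x ∉ Submodule.span K s ↔ ∃ u, (∀ y ∈ s, B y u = 0) ∧ B x u ≠ 0 := by
  have mem_orthogonal_span (u : V) :
      u ∈ B.orthogonal (Submodule.span K s) ↔ ∀ y ∈ s, B y u = 0 :=
    ⟨fun hu y hy => hu y (Submodule.subset_span hy),
      fun hu => (Submodule.span_le (p := LinearMap.ker (B.flip u))).2 hu⟩
  rw [← B.orthogonal_orthogonal hB hB₀ (Submodule.span K s), mem_orthogonal_iff]
  simp only [mem_orthogonal_span, not_forall, exists_prop, hB₀.eq_iff]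

namespace Matrix

variable {ι m n p R : Type*} [Fintype ι] [CommSemiring R]

def piKronecker (A : ι → Matrix m n R) : Matrix (ι → m) (ι → n) R :=
  of fun v w => ∏ i, A i (v i) (w i)

lemma piKronecker_mul [DecidableEq ι] [Fintype n] (A : ι → Matrix m n R)
    (B : ι → Matrix n p R) : piKronecker A * piKronecker B = piKronecker fun i => A i * B i := by
  ext v w
  simp only [piKronecker, mul_apply, of_apply, ← Finset.prod_mul_distrib]
  rw [Fintype.prod_sum]

lemma piKronecker_smul (c : ι → R) (A : ι → Matrix m n R) :
    piKronecker (fun i => c i • A i) = (∏ i, c i) • piKronecker A := by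
  ext v w
  simp [piKronecker, Finset.prod_mul_distrib]

lemma piKronecker_one [DecidableEq ι] [DecidableEq m] :
    piKronecker (fun _ : ι => (1 : Matrix m m R)) = 1 := by
  ext v w
  simp [piKronecker, one_apply, Finset.prod_boole, funext_iff]

lemma trace_piKronecker [DecidableEq ι] [Fintype m] (A : ι → Matrix m m R) :
    (piKronecker A).trace = ∏ i, (A i).trace := by
  simp only [trace, diag, piKronecker, of_apply]
  rw [Fintype.prod_sum]

end Matrix

section Symplectic

variable (K ι : Type*) [CommRing K] [Fintype ι]

def symplecticForm : LinearMap.BilinForm K (ι → K × K) :=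
  ∑ i, ((LinearMap.mul K K).compl₁₂ (LinearMap.fst K K K) (LinearMap.snd K K K) -
    (LinearMap.mul K K).compl₁₂ (LinearMap.snd K K K) (LinearMap.fst K K K)).compl₁₂
      (LinearMap.proj i) (LinearMap.proj i)

variable {K ι}

lemma symplecticForm_apply (u v : ι → K × K) :
    symplecticForm K ι u v = ∑ i, ((u i).1 * (v i).2 - (u i).2 * (v i).1) := by
  simp [symplecticForm]

lemma symplecticForm_isAlt : (symplecticForm K ι).IsAlt := fun u => by
  simp [symplecticForm_apply, mul_comm]

lemma symplecticForm_isRefl : (symplecticForm K ι).IsRefl := symplecticForm_isAlt.isRefl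

lemma symplecticForm_nondegenerate : (symplecticForm K ι).Nondegenerate := by
  classical
  refine (LinearMap.IsRefl.nondegenerate_iff_separatingLeft (B := symplecticForm K ι)
    symplecticForm_isRefl).2 fun u hu => funext fun i => ?_
  have hx : (u i).1 = 0 := by
    simpa [symplecticForm_apply, Pi.single_apply, apply_ite] using hu (Pi.single i (0, 1))
  have hz : (u i).2 = 0 := by
    simpa [symplecticForm_apply, Pi.single_apply, apply_ite] using hu (Pi.single i (1, 0))
  exact Prod.ext hx hz

end Symplectic

-- The binary symplectic coordinates `(x, z)` of a single-qubit Pauli `σ ∝ Xˣ Zᶻ`.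
def pauliBits : Fin 4 ≃ ZMod 2 × ZMod 2 where
  toFun := ![(0, 0), (1, 0), (1, 1), (0, 1)]
  invFun p := if p.1 = 0 then (if p.2 = 0 then 0 else 3) else (if p.2 = 0 then 1 else 2)
  left_inv := by decide
  right_inv := by decide

lemma pauliMat_mul_self (a : Fin 4) : pauliMat a * pauliMat a = 1 := by
  fin_cases a <;> ext i j <;> fin_cases i <;> fin_cases j <;>
    simp [pauliMat, mul_apply, Fin.sum_univ_two]

lemma trace_pauliMat_mul (a b : Fin 4) :
    (pauliMat a * pauliMat b).trace = if a = b then 2 else 0 := by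
  fin_cases a <;> fin_cases b <;> norm_num [pauliMat, trace, Fin.sum_univ_two]

lemma pauliMat_mul_comm (a b : Fin 4) :
    pauliMat a * pauliMat b = signChar ((pauliBits a).1 * (pauliBits b).2 -
      (pauliBits a).2 * (pauliBits b).1) • (pauliMat b * pauliMat a) := by
  fin_cases a <;> fin_cases b <;> ext i j <;> fin_cases i <;> fin_cases j <;>
    simp [pauliMat, pauliBits, signChar, mul_apply, Fin.sum_univ_two, ZMod.val_one]

lemma exists_pauliMat_mul (a b : Fin 4) : ∃ c : ℂ, c ≠ 0 ∧
    pauliMat a * pauliMat b = c • pauliMat (pauliBits.symm (pauliBits a + pauliBits b)) := by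
  refine ⟨![![1, 1, 1, 1], ![1, 1, Complex.I, -Complex.I], ![1, -Complex.I, 1, Complex.I],
    ![1, Complex.I, -Complex.I, 1]] a b, ?_, ?_⟩
  · fin_cases a <;> fin_cases b <;> simp
  · fin_cases a <;> fin_cases b <;> ext i j <;> fin_cases i <;> fin_cases j <;>
      simp +decide [pauliMat, pauliBits, mul_apply, Fin.sum_univ_two]

def pauliVec (n : ℕ) : (Fin n → Fin 4) ≃ (Fin n → ZMod 2 × ZMod 2) :=
  Equiv.piCongrRight fun _ => pauliBits

variable {n : ℕ}

-- The set `Q_U'` of Pauli operators occurring in the Pauli expansion of `U`.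
def pauliSupport (U : Matrix (Fin n → Fin 2) (Fin n → Fin 2) ℂ) : Set (Fin n → Fin 4) :=
  {g | (U * PauliOp n g).trace ≠ 0}

lemma pauliOp_eq_piKronecker (f : Fin n → Fin 4) :
    PauliOp n f = piKronecker fun i => pauliMat (f i) := rfl

lemma pauliOp_symm_zero : PauliOp n ((pauliVec n).symm 0) = 1 := piKronecker_one

lemma pauliOp_mul_self (f : Fin n → Fin 4) : PauliOp n f * PauliOp n f = 1 := by
  simp only [pauliOp_eq_piKronecker, piKronecker_mul, pauliMat_mul_self, piKronecker_one]

lemma trace_pauliOp_mul (f g : Fin n → Fin 4) :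
    (PauliOp n f * PauliOp n g).trace = if f = g then 2 ^ n else 0 := by
  simp [pauliOp_eq_piKronecker, piKronecker_mul, trace_piKronecker, trace_pauliMat_mul,
    Finset.prod_ite_zero, funext_iff]

lemma pauliOp_mul_comm (f g : Fin n → Fin 4) :
    PauliOp n f * PauliOp n g = signChar (symplecticForm (ZMod 2) (Fin n) (pauliVec n f)
      (pauliVec n g)) • (PauliOp n g * PauliOp n f) := by
  simp only [pauliOp_eq_piKronecker, piKronecker_mul, symplecticForm_apply,
    AddChar.map_sum_eq_prod, ← piKronecker_smul]
  exact congrArg piKronecker (funext fun i => pauliMat_mul_comm (f i) (g i))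

lemma exists_pauliOp_mul (f g : Fin n → Fin 4) : ∃ c : ℂ, c ≠ 0 ∧ PauliOp n f * PauliOp n g =
    c • PauliOp n ((pauliVec n).symm (pauliVec n f + pauliVec n g)) := by
  choose c hc hmul using exists_pauliMat_mul
  refine ⟨∏ i, c (f i) (g i), Finset.prod_ne_zero_iff.2 fun i _ => hc _ _, ?_⟩
  simp only [pauliOp_eq_piKronecker, piKronecker_mul, hmul, piKronecker_smul]
  rfl

lemma exists_list_prod_pauliOp (l : List (Fin n → Fin 4)) : ∃ c : ℂ, c ≠ 0 ∧
    (l.map (PauliOp n)).prod = c • PauliOp n ((pauliVec n).symm (l.map (pauliVec n)).sum) := by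
  induction l with
  | nil => exact ⟨1, one_ne_zero, by simp [pauliOp_symm_zero]⟩
  | cons g l ih =>
    obtain ⟨c, hc, hl⟩ := ih
    obtain ⟨c', hc', hg⟩ := exists_pauliOp_mul g ((pauliVec n).symm (l.map (pauliVec n)).sum)
    refine ⟨c * c', mul_ne_zero hc hc', ?_⟩
    rw [List.map_cons, List.prod_cons, hl, mul_smul_comm, hg, smul_smul, Equiv.apply_symm_apply,
      List.map_cons, List.sum_cons]

lemma eq_of_pauliOp_eq_smul {f g : Fin n → Fin 4} {c : ℂ} (h : PauliOp n f = c • PauliOp n g) :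
    f = g := by
  by_contra hfg
  have := congrArg (fun A => (A * PauliOp n f).trace) h
  simp [trace_pauliOp_mul, Ne.symm hfg] at this

lemma exists_list_prod_iff_mem_span (S : Set (Fin n → Fin 4)) (f : Fin n → Fin 4) :
    (∃ (l : List (Fin n → Fin 4)) (c : ℂ),
        (∀ g ∈ l, g ∈ S) ∧ PauliOp n f = c • (l.map (PauliOp n)).prod) ↔
      pauliVec n f ∈ Submodule.span (ZMod 2) (pauliVec n '' S) := by
  rw [Submodule.mem_span_zmod_iff_exists_list]
  constructor
  · rintro ⟨l, c, hlS, hf⟩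
    obtain ⟨c', -, hl⟩ := exists_list_prod_pauliOp l
    rw [hl, smul_smul] at hf
    refine ⟨l.map (pauliVec n), fun y hy => ?_,
      by rw [eq_of_pauliOp_eq_smul hf, Equiv.apply_symm_apply]⟩
    obtain ⟨g, hg, rfl⟩ := List.mem_map.1 hy
    exact Set.mem_image_of_mem _ (hlS g hg)
  · rintro ⟨l, hlS, hsum⟩
    obtain ⟨c, hc, hl⟩ := exists_list_prod_pauliOp (l.map (pauliVec n).symm)
    refine ⟨l.map (pauliVec n).symm, c⁻¹, fun g hg => ?_, ?_⟩
    · obtain ⟨y, hy, rfl⟩ := List.mem_map.1 hg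
      obtain ⟨h, hS, rfl⟩ := hlS y hy
      rwa [Equiv.symm_apply_apply]
    · rw [hl, List.map_map, Equiv.self_comp_symm, List.map_id, hsum, Equiv.symm_apply_apply,
        inv_smul_smul₀ hc]

lemma linearIndependent_pauliOp : LinearIndependent ℂ (PauliOp n) :=
  LinearMap.BilinForm.linearIndependent_of_iIsOrtho
    (B := (LinearMap.mul ℂ _).compr₂ (traceLinearMap _ ℂ ℂ))
    (LinearMap.BilinForm.iIsOrtho_def.2 fun f g hfg => by simp [trace_pauliOp_mul, hfg])
    fun f => by simp [trace_pauliOp_mul]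

lemma span_pauliOp : Submodule.span ℂ (Set.range (PauliOp n)) = ⊤ :=
  linearIndependent_pauliOp.span_eq_top_of_card_eq_finrank' <| by
    simp [Module.finrank_matrix, ← mul_pow]

theorem pauli_expansion (U : Matrix (Fin n → Fin 2) (Fin n → Fin 2) ℂ) :
    U = ∑ h, ((U * PauliOp n h).trace / 2 ^ n) • PauliOp n h := by
  obtain ⟨c, rfl⟩ := (Submodule.mem_span_range_iff_exists_fun ℂ).1
    (span_pauliOp ▸ Submodule.mem_top : U ∈ Submodule.span ℂ (Set.range (PauliOp n)))
  have htrace (h : Fin n → Fin 4) :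
      ((∑ g, c g • PauliOp n g) * PauliOp n h).trace = 2 ^ n * c h := by
    simp [Finset.sum_mul, trace_sum, trace_pauliOp_mul, mul_comm]
  simp [htrace]

lemma commute_pauliOp_iff_symplecticForm_eq_zero (f g : Fin n → Fin 4) :
    Commute (PauliOp n f) (PauliOp n g) ↔
      symplecticForm (ZMod 2) (Fin n) (pauliVec n f) (pauliVec n g) = 0 := by
  refine ⟨fun hfg => by_contra fun h => ?_, fun h => ?_⟩
  · have hne : PauliOp n g * PauliOp n f ≠ 0 := fun hzero => by
      have hone : PauliOp n g * PauliOp n f * (PauliOp n f * PauliOp n g) = 1 := by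
        rw [mul_assoc, ← mul_assoc (PauliOp n f), pauliOp_mul_self, one_mul, pauliOp_mul_self]
      simp [hzero] at hone
    have hsign :
        (1 : ℂ) • (PauliOp n g * PauliOp n f) = (-1 : ℂ) • (PauliOp n g * PauliOp n f) := by
      rw [one_smul, ← signChar_apply_of_ne_zero h, ← pauliOp_mul_comm, hfg.eq]
    exact absurd (smul_left_injective ℂ hne hsign) (by norm_num)
  · rw [Commute, SemiconjBy, pauliOp_mul_comm, h, AddChar.map_zero_eq_one, one_smul]

lemma pauliOp_commute_or_anticommute (f g : Fin n → Fin 4) :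
    Commute (PauliOp n f) (PauliOp n g) ∨
      PauliOp n f * PauliOp n g = -(PauliOp n g * PauliOp n f) := by
  by_cases h : symplecticForm (ZMod 2) (Fin n) (pauliVec n f) (pauliVec n g) = 0
  · exact .inl ((commute_pauliOp_iff_symplecticForm_eq_zero f g).2 h)
  · rw [pauliOp_mul_comm, signChar_apply_of_ne_zero h, neg_one_smul]
    exact .inr rfl

lemma commute_pauliOp_iff_forall_mem_pauliSupport
    (U : Matrix (Fin n → Fin 2) (Fin n → Fin 2) ℂ) (g : Fin n → Fin 4) :
    Commute U (PauliOp n g) ↔ ∀ h ∈ pauliSupport U, Commute (PauliOp n h) (PauliOp n g) := by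
  refine ⟨fun hU h hh => ?_, fun hS => ?_⟩
  · refine (pauliOp_commute_or_anticommute g h).elim Commute.symm fun hanti => absurd ?_ hh
    -- Conjugation by `P_g` fixes `U` but negates `P_h`.
    refine self_eq_neg.1 <| calc
      (U * PauliOp n h).trace = (PauliOp n g * (U * PauliOp n h * PauliOp n g)).trace := by
        rw [trace_mul_comm (PauliOp n g), mul_assoc, pauliOp_mul_self, mul_one]
      _ = (U * (PauliOp n g * PauliOp n h) * PauliOp n g).trace := by
        rw [← mul_assoc, ← mul_assoc, ← hU.eq, mul_assoc U]
      _ = -(U * PauliOp n h).trace := by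
        rw [hanti, mul_neg, neg_mul, trace_neg, mul_assoc, mul_assoc, pauliOp_mul_self, mul_one]
  · rw [pauli_expansion U]
    refine Commute.sum_left _ _ _ fun h _ => ?_
    by_cases hh : h ∈ pauliSupport U
    · exact (hS h hh).smul_left _
    · rw [show (U * PauliOp n h).trace = 0 from not_not.1 hh, zero_div, zero_smul]
      exact Commute.zero_left _

theorem not_mem_pauli_group_iff_exists_noncommuting_general {n : ℕ}
    (U : Matrix (Fin n → Fin 2) (Fin n → Fin 2) ℂ)
    (f : Fin n → Fin 4) :
    (¬ ∃ (l : List (Fin n → Fin 4)) (c : ℂ),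
        (∀ g ∈ l, (U * PauliOp n g).trace ≠ 0) ∧
        PauliOp n f = c • (l.map (PauliOp n)).prod)
    ↔ ∃ g : Fin n → Fin 4,
        U * PauliOp n g = PauliOp n g * U ∧
        PauliOp n f * PauliOp n g ≠ PauliOp n g * PauliOp n f := by
  refine (not_congr (exists_list_prod_iff_mem_span (pauliSupport U) f)).trans <|
    (LinearMap.BilinForm.notMem_span_iff_exists_orthogonal symplecticForm_nondegenerate
      symplecticForm_isRefl).trans ((pauliVec n).exists_congr fun g => ?_).symm
  rw [Set.forall_mem_image]
  exact and_congr ((commute_pauliOp_iff_forall_mem_pauliSupport U g).trans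
      (forall₂_congr fun h _ => commute_pauliOp_iff_symplecticForm_eq_zero h g))
    (not_congr (commute_pauliOp_iff_symplecticForm_eq_zero f g))

/-- For an `n`-qubit unitary `U`, a Pauli operator `P` is not in the
group `Q_U` generated (up to phase) by the Paulis appearing in the Pauli expansion
of `U` if and only if there is a Pauli operator commuting with `U` that
anticommutes (fails to commute) with `P`. -/
theorem not_mem_pauli_group_iff_exists_noncommuting {n : ℕ}
    (U : Matrix (Fin n → Fin 2) (Fin n → Fin 2) ℂ)
    (hU : Uᴴ * U = 1) (hU' : U * Uᴴ = 1)
    (f : Fin n → Fin 4) :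
    (¬ ∃ (l : List (Fin n → Fin 4)) (c : ℂ),
        (∀ g ∈ l, (U * PauliOp n g).trace ≠ 0) ∧
        PauliOp n f = c • (l.map (PauliOp n)).prod)
    ↔ ∃ g : Fin n → Fin 4,
        U * PauliOp n g = PauliOp n g * U ∧
        PauliOp n f * PauliOp n g ≠ PauliOp n g * PauliOp n f :=
  not_mem_pauli_group_iff_exists_noncommuting_general U f
end
end

section
/- Let ρ = (1/2)(I + xX + yY) with 0 ≤ y ≤ x, x² + y² ≤ 1, and let F be the single-qubit stabilizer octahedron. The resource weight W_F(ρ) = max{λ ≤ 1 : ∃σ ∈ F, ρ ≥ λσ} equals: 1 if y ≤ 1−x; (√2 − (x+y))/(√2 − 1) if 1−x ≤ y ≤ (√2+1)(1−x); and (1 − (x²+y²))/(2(1−x)) if y > (√2+1)(1−x). -/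
open Matrix BigOperators
open scoped ComplexOrder

noncomputable section

def sigmaX : Matrix (Fin 2) (Fin 2) ℂ := !![0, 1; 1, 0]
def sigmaY : Matrix (Fin 2) (Fin 2) ℂ := !![0, -Complex.I; Complex.I, 0]
def sigmaZ : Matrix (Fin 2) (Fin 2) ℂ := !![1, 0; 0, -1]

/-- A single-qubit stabilizer state: a Bloch vector in the octahedron
`|a| + |b| + |c| ≤ 1`. -/
def IsStab1 (σ : Matrix (Fin 2) (Fin 2) ℂ) : Prop :=
  ∃ a b c : ℝ, |a| + |b| + |c| ≤ 1 ∧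
    σ = (1/2 : ℂ) • (1 + (a : ℂ) • sigmaX + (b : ℂ) • sigmaY + (c : ℂ) • sigmaZ)

/-- Resource weight `W_F(ρ) = max{λ ≤ 1 : ∃ σ ∈ F, ρ ≥ λσ}`. -/
def Wt1 (ρ : Matrix (Fin 2) (Fin 2) ℂ) : ℝ :=
  sSup {l : ℝ | l ≤ 1 ∧ ∃ s, IsStab1 s ∧ (ρ - (l : ℂ) • s).PosSemidef}

/-! In Bloch coordinates, `ρ ≥ l σ` says that the ball of radius `1 - l` about the Bloch
vector `r = (x, y, 0)` of `ρ` contains the point `l s` of the scaled octahedron `l F`, since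
a 2×2 Hermitian matrix is positive semidefinite iff its trace and determinant are
nonnegative. If `r ∈ F` we may take `l = 1`. Otherwise the ball first reaches `l F` either on
the edge `a + b = l` of the face through `r`, where Cauchy–Schwarz `a + b ≤ √2 |(a, b)|`
gives the bound `l (√2 - 1) ≤ √2 - (x + y)`, or, once `l ≤ x - y`, at the vertex
`(l, 0, 0)`, which is then the point of `l F` closest to `r`. -/

theorem Matrix.IsHermitian.posSemidef_iff_re_trace_nonneg_and_re_det_nonneg {𝕜 : Type*}
    [RCLike 𝕜] {A : Matrix (Fin 2) (Fin 2) 𝕜} (hA : A.IsHermitian) :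
    A.PosSemidef ↔ 0 ≤ RCLike.re A.trace ∧ 0 ≤ RCLike.re A.det := by
  rw [hA.posSemidef_iff_eigenvalues_nonneg, hA.trace_eq_sum_eigenvalues,
    hA.det_eq_prod_eigenvalues]
  simp only [Fin.sum_univ_two, Fin.prod_univ_two, Pi.le_def, Fin.forall_fin_two, Pi.zero_apply]
  norm_cast
  constructor
  · rintro ⟨h0, h1⟩
    exact ⟨add_nonneg h0 h1, mul_nonneg h0 h1⟩
  · rintro ⟨hsum, hprod⟩
    exact ⟨by nlinarith, by nlinarith⟩

def blochMatrix (t u v w : ℝ) : Matrix (Fin 2) (Fin 2) ℂ :=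
  (1/2 : ℂ) •
    ((t : ℂ) • 1 + (u : ℂ) • sigmaX + (v : ℂ) • sigmaY + (w : ℂ) • sigmaZ)

section Bloch

variable (t u v w : ℝ)

lemma blochMatrix_eq :
    blochMatrix t u v w =
      !![(((t + w) / 2 : ℝ) : ℂ), (⟨u / 2, -v / 2⟩ : ℂ);
         (⟨u / 2, v / 2⟩ : ℂ), (((t - w) / 2 : ℝ) : ℂ)] := by
  ext i j
  fin_cases i <;> fin_cases j <;>
    simp [blochMatrix, sigmaX, sigmaY, sigmaZ, Complex.ext_iff, div_eq_inv_mul, sub_eq_add_neg]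

lemma blochMatrix_isHermitian : (blochMatrix t u v w).IsHermitian := by
  rw [blochMatrix_eq]
  ext i j
  fin_cases i <;> fin_cases j <;> simp [Complex.ext_iff, neg_div]

lemma re_trace_blochMatrix : (blochMatrix t u v w).trace.re = t := by
  rw [blochMatrix_eq, trace_fin_two]
  simp only [of_apply, cons_val', cons_val_zero, cons_val_one, cons_val_fin_one, Complex.add_re,
    Complex.ofReal_re]
  ring

lemma re_det_blochMatrix :
    (blochMatrix t u v w).det.re = (t ^ 2 - (u ^ 2 + v ^ 2 + w ^ 2)) / 4 := by
  rw [blochMatrix_eq, det_fin_two]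
  simp only [of_apply, cons_val', cons_val_zero, cons_val_one, cons_val_fin_one, Complex.sub_re,
    Complex.mul_re, Complex.ofReal_re, Complex.ofReal_im]
  ring

lemma posSemidef_blochMatrix_iff :
    (blochMatrix t u v w).PosSemidef ↔ 0 ≤ t ∧ u ^ 2 + v ^ 2 + w ^ 2 ≤ t ^ 2 := by
  rw [(blochMatrix_isHermitian t u v w).posSemidef_iff_re_trace_nonneg_and_re_det_nonneg]
  simp only [RCLike.re_to_complex, re_trace_blochMatrix, re_det_blochMatrix]
  constructor <;> rintro ⟨h1, h2⟩ <;> exact ⟨h1, by linarith⟩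

lemma blochMatrix_sub_smul (l t' u' v' w' : ℝ) :
    blochMatrix t u v w - (l : ℂ) • blochMatrix t' u' v' w'
      = blochMatrix (t - l * t') (u - l * u') (v - l * v') (w - l * w') := by
  simp only [blochMatrix]
  push_cast
  module

end Bloch

def feasibleWeights (x y : ℝ) : Set ℝ :=
  {l | l ≤ 1 ∧ ∃ a b c : ℝ, |a| + |b| + |c| ≤ 1 ∧
    (x - l * a) ^ 2 + (y - l * b) ^ 2 + (l * c) ^ 2 ≤ (1 - l) ^ 2}

lemma Wt1_eq_sSup_feasibleWeights (x y : ℝ) :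
    Wt1 ((1/2 : ℂ) • (1 + (x : ℂ) • sigmaX + (y : ℂ) • sigmaY)) =
      sSup (feasibleWeights x y) := by
  have hρ :
      (1/2 : ℂ) • (1 + (x : ℂ) • sigmaX + (y : ℂ) • sigmaY) = blochMatrix 1 x y 0 := by
    simp [blochMatrix]
  have hσ (s) :
      IsStab1 s ↔ ∃ a b c : ℝ, |a| + |b| + |c| ≤ 1 ∧ s = blochMatrix 1 a b c := by
    simp [IsStab1, blochMatrix]
  have hpsd (l a b c : ℝ) :
      (blochMatrix 1 x y 0 - (l : ℂ) • blochMatrix 1 a b c).PosSemidef ↔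
      l ≤ 1 ∧ (x - l * a) ^ 2 + (y - l * b) ^ 2 + (l * c) ^ 2 ≤ (1 - l) ^ 2 := by
    rw [blochMatrix_sub_smul, posSemidef_blochMatrix_iff]
    simp only [mul_one, zero_sub, neg_sq]
    constructor <;> rintro ⟨h1, h2⟩ <;> exact ⟨by linarith, h2⟩
  rw [Wt1, hρ]
  congr 1
  ext l
  simp only [Set.mem_ofPred_eq, feasibleWeights, hσ]
  constructor
  · rintro ⟨hl, _, ⟨a, b, c, habc, rfl⟩, h⟩
    exact ⟨hl, a, b, c, habc, ((hpsd l a b c).1 h).2⟩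
  · rintro ⟨hl, a, b, c, habc, h⟩
    exact ⟨hl, _, ⟨a, b, c, habc, rfl⟩, (hpsd l a b c).2 ⟨hl, h⟩⟩

section Geometry

variable {x y l : ℝ}

lemma add_le_sqrt_two_of_sq_add_sq_le_one (h : x ^ 2 + y ^ 2 ≤ 1) : x + y ≤ √2 :=
  (le_abs_self _).trans (Real.abs_le_sqrt (by nlinarith [sq_nonneg (x - y)]))

lemma isGreatest_one_feasibleWeights (h : |x| + |y| ≤ 1) : IsGreatest (feasibleWeights x y) 1 :=
  ⟨⟨le_rfl, x, y, 0, by simpa using h, by simp⟩, fun _ hl => hl.1⟩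

lemma mem_feasibleWeights_of_edge (hl0 : 0 ≤ l) (hl1 : l ≤ 1) (hdiff : |x - y| ≤ l)
    (hedge : x + y - l = √2 * (1 - l)) : l ∈ feasibleWeights x y := by
  have hsq : √2 ^ 2 = 2 := Real.sq_sqrt zero_le_two
  refine ⟨hl1, ?_⟩
  rcases hl0.eq_or_lt with rfl | hl0
  · obtain rfl : x = y := sub_eq_zero.1 (abs_nonpos_iff.1 hdiff)
    have hx : 2 * x = √2 := by linarith
    exact ⟨0, 0, 0, by simp, by nlinarith [congrArg (· ^ 2) hx]⟩
  obtain ⟨hdiff₁, hdiff₂⟩ := abs_le.1 hdiff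
  -- `l • σ` is the point `((x - y + l) / 2, (y - x + l) / 2, 0)` of the edge `a + b = l`.
  refine ⟨(x - y + l) / (2 * l), (y - x + l) / (2 * l), 0, ?_, ?_⟩
  · rw [abs_of_nonneg (div_nonneg (by linarith) (by positivity)),
      abs_of_nonneg (div_nonneg (by linarith) (by positivity)), abs_zero, add_zero,
      ← add_div]
    exact div_le_one_of_le₀ (by linarith) (by positivity)
  · have ha : x - l * ((x - y + l) / (2 * l)) = √2 * (1 - l) / 2 := by
      field_simp
      linarith
    have hb : y - l * ((y - x + l) / (2 * l)) = √2 * (1 - l) / 2 := by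
      field_simp
      linarith
    rw [ha, hb]
    nlinarith

lemma mul_sqrt_two_sub_one_le_of_mem_feasibleWeights (hxy : x + y ≤ √2)
    (hl : l ∈ feasibleWeights x y) : l * (√2 - 1) ≤ √2 - (x + y) := by
  obtain ⟨hl1, a, b, c, habc, hdist⟩ := hl
  have hsq : √2 ^ 2 = 2 := Real.sq_sqrt zero_le_two
  have hone : 1 < √2 := Real.one_lt_sqrt_two
  rcases le_or_gt l 0 with hl0 | hl0
  · nlinarith
  have hab : l * a + l * b ≤ l := by
    nlinarith [le_abs_self a, le_abs_self b, abs_nonneg c]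
  -- Cauchy–Schwarz in the plane: `p + q ≤ √2 · √(p² + q²)`.
  have hsum : (x - l * a) + (y - l * b) ≤ √2 * (1 - l) := by
    have hsum_sq : ((x - l * a) + (y - l * b)) ^ 2 ≤ (√2 * (1 - l)) ^ 2 := by
      nlinarith [sq_nonneg ((x - l * a) - (y - l * b)), sq_nonneg (l * c)]
    exact abs_le_of_sq_le_sq' hsum_sq (by nlinarith) |>.2
  nlinarith

lemma sq_dist_smul_vertex_le (hy : 0 ≤ y) (hl0 : 0 ≤ l) (hlxy : l ≤ x - y) {a b c : ℝ}
    (habc : |a| + |b| + |c| ≤ 1) :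
    (x - l) ^ 2 + y ^ 2 ≤ (x - l * a) ^ 2 + (y - l * b) ^ 2 + (l * c) ^ 2 := by
  have hs : a ^ 2 + b ^ 2 + c ^ 2 ≤ 1 := by
    nlinarith [abs_nonneg a, abs_nonneg b, abs_nonneg c, sq_abs a, sq_abs b, sq_abs c]
  have hab : a + b ≤ 1 := by linarith [le_abs_self a, le_abs_self b, abs_nonneg c]
  have hgap : 0 ≤ (x - y - l) * (1 - (a ^ 2 + b ^ 2 + c ^ 2))
      + (x - y) * ((1 - a) ^ 2 + b ^ 2 + c ^ 2) + 2 * y * (1 - a - b) := by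
    have := mul_nonneg (sub_nonneg.2 hlxy) (sub_nonneg.2 hs)
    have := mul_nonneg (hl0.trans hlxy) (by positivity : 0 ≤ (1 - a) ^ 2 + b ^ 2 + c ^ 2)
    have := mul_nonneg (mul_nonneg zero_le_two hy) (by linarith : 0 ≤ 1 - a - b)
    linarith
  nlinarith [mul_nonneg hl0 hgap]

lemma isGreatest_feasibleWeights_edge (hyx : y ≤ x) (hxy : x + y ≤ √2) (h1 : 1 - x ≤ y)
    (h2 : y ≤ (√2 + 1) * (1 - x)) :
    IsGreatest (feasibleWeights x y) ((√2 - (x + y)) / (√2 - 1)) := by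
  have hr : 0 < √2 - 1 := sub_pos.2 Real.one_lt_sqrt_two
  have hsq : √2 ^ 2 = 2 := Real.sq_sqrt zero_le_two
  set L := (√2 - (x + y)) / (√2 - 1)
  have hL : L * (√2 - 1) = √2 - (x + y) := div_mul_cancel₀ _ hr.ne'
  have hL0 : 0 ≤ L := div_nonneg (by linarith) hr.le
  refine ⟨mem_feasibleWeights_of_edge hL0 ((div_le_one hr).2 (by linarith)) ?_
    (by linear_combination hL), fun l hl => ?_⟩
  · rw [abs_of_nonneg (by linarith), le_div_iff₀ hr]
    -- `(√2 - 1)(x - y) - (√2 - (x + y)) = (2 - √2)(y - (√2 + 1)(1 - x))`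
    nlinarith [mul_nonneg (by nlinarith : 0 ≤ 2 - √2) (sub_nonneg.2 h2)]
  · exact (le_div_iff₀ hr).2 (mul_sqrt_two_sub_one_le_of_mem_feasibleWeights hxy hl)

lemma isGreatest_feasibleWeights_vertex (hy : 0 ≤ y) (hball : x ^ 2 + y ^ 2 ≤ 1)
    (h3 : (√2 + 1) * (1 - x) < y) :
    IsGreatest (feasibleWeights x y) ((1 - (x ^ 2 + y ^ 2)) / (2 * (1 - x))) := by
  have hxy := add_le_sqrt_two_of_sq_add_sq_le_one hball
  have hr : 0 < √2 - 1 := sub_pos.2 Real.one_lt_sqrt_two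
  have hsq : √2 ^ 2 = 2 := Real.sq_sqrt zero_le_two
  have hden : 0 < 2 * (1 - x) := by
    by_contra! hx
    have hy' : 0 < y := by nlinarith [Real.sqrt_nonneg 2]
    nlinarith
  set L := (1 - (x ^ 2 + y ^ 2)) / (2 * (1 - x))
  have hL : L * (2 * (1 - x)) = 1 - (x ^ 2 + y ^ 2) := div_mul_cancel₀ _ hden.ne'
  refine ⟨⟨(div_le_one hden).2 (by nlinarith), 1, 0, 0, by simp, ?_⟩, fun l hl => ?_⟩
  · simp only [mul_one, mul_zero, sub_zero]
    exact le_of_eq (by linear_combination hL)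
  rcases le_or_gt l 0 with hl0 | hl0
  · exact hl0.trans (div_nonneg (by linarith) hden.le)
  have hlxy : l ≤ x - y := by
    have hedge := mul_sqrt_two_sub_one_le_of_mem_feasibleWeights hxy hl
    have : √2 - (x + y) < (x - y) * (√2 - 1) := by
      nlinarith [mul_pos (by nlinarith : 0 < 2 - √2) (sub_pos.2 h3)]
    exact ((mul_lt_mul_iff_left₀ hr).1 (hedge.trans_lt this)).le
  obtain ⟨-, a, b, c, habc, hdist⟩ := hl
  have := sq_dist_smul_vertex_le hy hl0.le hlxy habc
  rw [le_div_iff₀ hden]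
  nlinarith

end Geometry

/-- For `ρ = (1/2)(I + xX + yY)` with `0 ≤ y ≤ x`, `x² + y² ≤ 1`, the
stabilizer weight is `1` if `y ≤ 1−x`; `(√2 − (x+y))/(√2 − 1)` if
`1−x ≤ y ≤ (√2+1)(1−x)`; and `(1 − (x²+y²))/(2(1−x))` if `y > (√2+1)(1−x)`. -/
theorem weight_of_rotated_state (x y : ℝ)
    (hy0 : 0 ≤ y) (hyx : y ≤ x) (hball : x^2 + y^2 ≤ 1) :
    ((y ≤ 1 - x) →
        Wt1 ((1/2 : ℂ) • (1 + (x : ℂ) • sigmaX + (y : ℂ) • sigmaY)) = 1)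
    ∧ ((1 - x ≤ y ∧ y ≤ (Real.sqrt 2 + 1) * (1 - x)) →
        Wt1 ((1/2 : ℂ) • (1 + (x : ℂ) • sigmaX + (y : ℂ) • sigmaY))
          = (Real.sqrt 2 - (x + y)) / (Real.sqrt 2 - 1))
    ∧ (((Real.sqrt 2 + 1) * (1 - x) < y) →
        Wt1 ((1/2 : ℂ) • (1 + (x : ℂ) • sigmaX + (y : ℂ) • sigmaY))
          = (1 - (x^2 + y^2)) / (2 * (1 - x))) := by
  have hx : 0 ≤ x := hy0.trans hyx
  have hxy := add_le_sqrt_two_of_sq_add_sq_le_one hball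
  simp only [Wt1_eq_sSup_feasibleWeights]
  refine ⟨fun h => ?_, fun ⟨h1, h2⟩ => ?_, fun h3 => ?_⟩
  · refine (isGreatest_one_feasibleWeights ?_).csSup_eq
    rw [abs_of_nonneg hx, abs_of_nonneg hy0]
    linarith
  · exact (isGreatest_feasibleWeights_edge hyx hxy h1 h2).csSup_eq
  · exact (isGreatest_feasibleWeights_vertex hy0 hball h3).csSup_eq
end
end
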